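/- Let T be a bounded linear operator on a Banach space X commuting with a projection P and satisfying TP = P. If δ_P(T^{n0}) < 1 for some n0 ∈ ℕ, then T is uniformly P-ergodic, i.e. ‖T^n − P‖ → 0; moreover there exist constants C > 0, α > 0 such that ‖T^n − P‖ ≤ C e^{−αn} for all sufficiently large n (assuming ‖T‖ ≤ 1). -/

import Mathlib

open Filter Topology

noncomputable def dobrushin {X : Type*} [NormedAddCommGroup X] [NormedSpace ℝ X]
    (P A : X →L[ℝ] X) : ℝ :=
  sSup {r : ℝ | ∃ x : X, P x = 0 ∧ x ≠ 0 ∧ r = ‖A x‖ / ‖x‖}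

/-!
On `ker P` the map `T ^ m` (with `m = n0 + 1`, so that `m > 0`) contracts by the factor
`δ = δ_P(T ^ m) ≤ δ_P(T ^ n0) < 1`, and `ker P` is `T`-invariant because `T` commutes with `P`.
Since `T ^ n * P = P`, we have `T ^ n - P = T ^ (n % m) * (T ^ m) ^ (n / m) * (1 - P)` with
`1 - P` mapping into `ker P`, whence `‖T ^ n - P‖ ≤ ‖1 - P‖ * δ ^ (n / m)`: geometric, hence
exponential, decay.
-/

theorem pow_mul_eq_self_of_mul_eq_self {M : Type*} [Monoid M] {a b : M} (h : a * b = b) (n : ℕ) :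
    a ^ n * b = b := by
  induction n with
  | zero => simp
  | succ n ih => rw [pow_succ, mul_assoc, h, ih]

section Dobrushin

variable {X : Type*} [NormedAddCommGroup X] [NormedSpace ℝ X]

theorem dobrushin_nonneg (P A : X →L[ℝ] X) : 0 ≤ dobrushin P A :=
  Real.sSup_nonneg <| by rintro r ⟨x, -, -, rfl⟩; positivity

theorem norm_apply_le_dobrushin_mul {P A : X →L[ℝ] X} {x : X} (hx : P x = 0) :
    ‖A x‖ ≤ dobrushin P A * ‖x‖ := by
  rcases eq_or_ne x 0 with rfl | hx0
  · simp
  have hbdd : BddAbove {r : ℝ | ∃ x : X, P x = 0 ∧ x ≠ 0 ∧ r = ‖A x‖ / ‖x‖} := by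
    refine ⟨‖A‖, ?_⟩
    rintro r ⟨y, -, hy, rfl⟩
    exact div_le_of_le_mul₀ (norm_nonneg _) (norm_nonneg _) (A.le_opNorm y)
  rw [← div_le_iff₀ (norm_pos_iff.mpr hx0)]
  exact le_csSup hbdd ⟨x, hx, hx0, rfl⟩

theorem dobrushin_mul_le_of_norm_le_one {P A B : X →L[ℝ] X} (hB : ‖B‖ ≤ 1) :
    dobrushin P (B * A) ≤ dobrushin P A := by
  refine Real.sSup_le ?_ (dobrushin_nonneg P A)
  rintro r ⟨x, hx, hx0, rfl⟩
  rw [div_le_iff₀ (norm_pos_iff.mpr hx0)]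
  calc ‖B (A x)‖ ≤ 1 * ‖A x‖ := B.le_of_opNorm_le hB _
    _ ≤ dobrushin P A * ‖x‖ := by rw [one_mul]; exact norm_apply_le_dobrushin_mul hx

theorem norm_pow_apply_le_dobrushin_pow_mul {P A : X →L[ℝ] X} (hcomm : Commute A P)
    {y : X} (hy : P y = 0) (k : ℕ) : ‖(A ^ k) y‖ ≤ dobrushin P A ^ k * ‖y‖ := by
  induction k with
  | zero => simp
  | succ k ih =>
    have hker : P ((A ^ k) y) = 0 := by
      rw [← mul_apply_eq_comp, ← (hcomm.pow_left k).eq, mul_apply_eq_comp, hy, map_zero]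
    calc ‖(A ^ (k + 1)) y‖ = ‖A ((A ^ k) y)‖ := by rw [pow_succ', mul_apply_eq_comp]
      _ ≤ dobrushin P A * ‖(A ^ k) y‖ := norm_apply_le_dobrushin_mul hker
      _ ≤ dobrushin P A * (dobrushin P A ^ k * ‖y‖) := by
        gcongr
        exact dobrushin_nonneg P A
      _ = dobrushin P A ^ (k + 1) * ‖y‖ := by ring

theorem norm_pow_apply_le_of_norm_le_one {T : X →L[ℝ] X} (hT : ‖T‖ ≤ 1) (k : ℕ) (y : X) :
    ‖(T ^ k) y‖ ≤ ‖y‖ := by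
  induction k generalizing y with
  | zero => simp
  | succ k ih =>
    calc ‖(T ^ (k + 1)) y‖ = ‖(T ^ k) (T y)‖ := by rw [pow_succ, mul_apply_eq_comp]
      _ ≤ ‖T y‖ := ih _
      _ ≤ ‖y‖ := by simpa using T.le_of_opNorm_le hT y

theorem norm_pow_sub_le_mul_dobrushin_pow {P T : X →L[ℝ] X} (hP : P * P = P) (hT : ‖T‖ ≤ 1)
    (hcomm : Commute T P) (hTP : T * P = P) (m n : ℕ) :
    ‖T ^ n - P‖ ≤ ‖1 - P‖ * dobrushin P (T ^ m) ^ (n / m) := by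
  have hpow : T ^ n - P = T ^ (n % m) * (T ^ m) ^ (n / m) * (1 - P) := by
    rw [← pow_mul, ← pow_add, Nat.mod_add_div, mul_sub, mul_one, pow_mul_eq_self_of_mul_eq_self hTP]
  have hker : ∀ x, P ((1 - P) x) = 0 := fun x => by
    rw [← mul_apply_eq_comp, mul_sub, mul_one, hP, sub_self, zero_apply]
  have hδ := dobrushin_nonneg P (T ^ m)
  refine ContinuousLinearMap.opNorm_le_bound _ (by positivity) fun x => ?_
  rw [hpow, mul_apply_eq_comp, mul_apply_eq_comp]
  calc ‖(T ^ (n % m)) (((T ^ m) ^ (n / m)) ((1 - P) x))‖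
      ≤ ‖((T ^ m) ^ (n / m)) ((1 - P) x)‖ := norm_pow_apply_le_of_norm_le_one hT _ _
    _ ≤ dobrushin P (T ^ m) ^ (n / m) * ‖(1 - P) x‖ :=
      norm_pow_apply_le_dobrushin_pow_mul (hcomm.pow_left m) (hker x) _
    _ ≤ dobrushin P (T ^ m) ^ (n / m) * (‖1 - P‖ * ‖x‖) := by
      gcongr
      exact (1 - P).le_opNorm x
    _ = ‖1 - P‖ * dobrushin P (T ^ m) ^ (n / m) * ‖x‖ := by ring

end Dobrushin

theorem exists_exp_bound_of_le_mul_pow_div {u : ℕ → ℝ} {K δ : ℝ} {m : ℕ} (hK : 0 ≤ K)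
    (hδ₀ : 0 ≤ δ) (hδ : δ < 1) (hm : 0 < m) (hu : ∀ n, u n ≤ K * δ ^ (n / m)) :
    ∃ C > 0, ∃ α > 0, ∀ n : ℕ, u n ≤ C * Real.exp (-α * n) := by
  -- `δ` may vanish, so we pass to a positive `q ≥ δ` in order to take its logarithm
  set q := max δ (1 / 2)
  have hq0 : 0 < q := lt_max_of_lt_right one_half_pos
  have hq1 : q < 1 := max_lt hδ one_half_lt_one
  have hlog : Real.log q < 0 := Real.log_neg hq0 hq1
  have hm' : (0 : ℝ) < m := Nat.cast_pos.mpr hm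
  refine ⟨(K + 1) / q, by positivity, -Real.log q / m, div_pos (neg_pos.mpr hlog) hm', fun n => ?_⟩
  have hfloor : (n : ℝ) / m - 1 ≤ ((n / m : ℕ) : ℝ) := by
    rw [← Nat.floor_div_eq_div (K := ℝ)]
    exact (Nat.sub_one_lt_floor _).le
  calc u n ≤ K * δ ^ (n / m) := hu n
    _ ≤ (K + 1) * q ^ (n / m) := by
      gcongr
      · linarith
      · exact le_max_left δ (1 / 2)
    _ = (K + 1) * Real.exp ((n / m : ℕ) * Real.log q) := by
      rw [Real.exp_nat_mul, Real.exp_log hq0]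
    _ ≤ (K + 1) * Real.exp (((n : ℝ) / m - 1) * Real.log q) := by
      gcongr (K + 1) * Real.exp ?_
      exact mul_le_mul_of_nonpos_right hfloor hlog.le
    _ = (K + 1) / q * Real.exp (-(-Real.log q / m) * n) := by
      rw [show ((n : ℝ) / m - 1) * Real.log q = -(-Real.log q / m) * n - Real.log q by
        field_simp, Real.exp_sub, Real.exp_log hq0]
      ring

theorem stmt9_general {X : Type*} [NormedAddCommGroup X] [NormedSpace ℝ X]
    (P T : X →L[ℝ] X) (hP : P * P = P) (hT : ‖T‖ ≤ 1) (hcomm : T * P = P * T)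
    (hTP : T * P = P) (n0 : ℕ) (hdelta : dobrushin P (T ^ n0) < 1) :
    Tendsto (fun n : ℕ => ‖T ^ n - P‖) atTop (𝓝 0) ∧
      ∃ C > (0 : ℝ), ∃ α > (0 : ℝ), ∃ N : ℕ, ∀ n ≥ N,
        ‖T ^ n - P‖ ≤ C * Real.exp (-α * n) := by
  have hdelta' : dobrushin P (T ^ (n0 + 1)) < 1 := by
    rw [pow_succ']
    exact (dobrushin_mul_le_of_norm_le_one hT).trans_lt hdelta
  obtain ⟨C, hC, α, hα, hbound⟩ :=
    exists_exp_bound_of_le_mul_pow_div (norm_nonneg (1 - P)) (dobrushin_nonneg _ _) hdelta'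
      n0.succ_pos (norm_pow_sub_le_mul_dobrushin_pow hP hT hcomm hTP (n0 + 1))
  have hexp : Tendsto (fun n : ℕ => C * Real.exp (-α * n)) atTop (𝓝 0) := by
    simpa using (Real.tendsto_exp_atBot.comp
      (tendsto_natCast_atTop_atTop.const_mul_atTop_of_neg (neg_neg_of_pos hα))).const_mul C
  exact ⟨squeeze_zero (fun n => norm_nonneg _) hbound hexp, C, hC, α, hα, 0, fun n _ => hbound n⟩

theorem stmt9 {X : Type*} [NormedAddCommGroup X] [NormedSpace ℝ X] [CompleteSpace X]
    (P T : X →L[ℝ] X) (hP : P * P = P) (hT : ‖T‖ ≤ 1) (hcomm : T * P = P * T)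
    (hTP : T * P = P) (n0 : ℕ) (hdelta : dobrushin P (T ^ n0) < 1) :
    Tendsto (fun n : ℕ => ‖T ^ n - P‖) atTop (𝓝 0) ∧
      ∃ C > (0 : ℝ), ∃ α > (0 : ℝ), ∃ N : ℕ, ∀ n ≥ N,
        ‖T ^ n - P‖ ≤ C * Real.exp (-α * n) :=
  stmt9_general P T hP hT hcomm hTP n0 hdelta
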